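/- The maximal singlet fraction is multiplicative under tensor products: for density matrices ρ₁ on ℂ^{d_{A1}} ⊗ ℂ^{d_{B1}} and ρ₂ on ℂ^{d_{A2}} ⊗ ℂ^{d_{B2}}, one has F(ρ₁ ⊠ ρ₂) = F(ρ₁) · F(ρ₂), where ρ₁ ⊠ ρ₂ denotes the Kronecker product of ρ₁ and ρ₂ with tensor factors reordered via the index identification ((a₁, b₁), (a₂, b₂)) ↦ ((a₁, a₂), (b₁, b₂)), so that it is a density matrix on ℂ^{d_{A1} d_{A2}} ⊗ ℂ^{d_{B1} d_{B2}} with A-system of dimension d_{A1} d_{A2}. -/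

import Mathlib

open scoped BigOperators
open scoped ComplexOrder
open Matrix

/-- The partial trace over the first (`A`) factor. -/
noncomputable def ptrA {A B : Type*} [Fintype A]
    (Y : Matrix (A × B) (A × B) ℂ) : Matrix B B ℂ :=
  Matrix.of fun b b' => ∑ a, Y (a, b) (a, b')

/-- The maximal singlet fraction of a bipartite (density) matrix `ρ`. -/
noncomputable def msf {A B : Type*} [Fintype A] [Fintype B] [DecidableEq A] [DecidableEq B]
    (ρ : Matrix (A × B) (A × B) ℂ) : ℝ :=
  sSup { x : ℝ | ∃ Y : Matrix (A × B) (A × B) ℂ, Y.PosSemidef ∧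
    ptrA Y = ((Fintype.card A : ℂ))⁻¹ • (1 : Matrix B B ℂ) ∧
    x = ((ρ * Y).trace).re }

/-- The Kronecker product of two bipartite matrices, with tensor factors reordered via the
index identification `((a₁, b₁), (a₂, b₂)) ↦ ((a₁, a₂), (b₁, b₂))`, so that the result is a
bipartite matrix with `A`-system `Fin dA₁ × Fin dA₂` and `B`-system `Fin dB₁ × Fin dB₂`. -/
def reKron (dA₁ dB₁ dA₂ dB₂ : ℕ)
    (ρ₁ : Matrix (Fin dA₁ × Fin dB₁) (Fin dA₁ × Fin dB₁) ℂ)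
    (ρ₂ : Matrix (Fin dA₂ × Fin dB₂) (Fin dA₂ × Fin dB₂) ℂ) :
    Matrix ((Fin dA₁ × Fin dA₂) × (Fin dB₁ × Fin dB₂))
      ((Fin dA₁ × Fin dA₂) × (Fin dB₁ × Fin dB₂)) ℂ :=
  Matrix.of fun p q =>
    ρ₁ (p.1.1, p.2.1) (q.1.1, q.2.1) * ρ₂ (p.1.2, p.2.2) (q.1.2, q.2.2)


section Aux
open Kronecker
variable {A B : Type*} [Fintype A] [Fintype B] [DecidableEq A] [DecidableEq B]

def liftA (A : Type*) {B : Type*} [DecidableEq A] (W : Matrix B B ℂ) :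
    Matrix (A × B) (A × B) ℂ :=
  (1 : Matrix A A ℂ) ⊗ₖ W

lemma liftA_apply (W : Matrix B B ℂ) (p q : A × B) :
    liftA A W p q = (if p.1 = q.1 then 1 else 0) * W p.2 q.2 := by
  cases p; cases q
  simp [liftA, Matrix.one_apply]

lemma ptrA_apply (Y : Matrix (A × B) (A × B) ℂ) (b b' : B) :
    ptrA Y b b' = ∑ a, Y (a, b) (a, b') := rfl

lemma ptrA_add (Y Z : Matrix (A × B) (A × B) ℂ) : ptrA (Y + Z) = ptrA Y + ptrA Z := by
  ext b b'; simp [ptrA, Finset.sum_add_distrib]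

lemma ptrA_smul (c : ℂ) (Y : Matrix (A × B) (A × B) ℂ) : ptrA (c • Y) = c • ptrA Y := by
  ext b b'; simp [ptrA, Finset.mul_sum]

lemma trace_ptrA (Y : Matrix (A × B) (A × B) ℂ) : (ptrA Y).trace = Y.trace := by
  simp only [Matrix.trace, Matrix.diag, ptrA, Matrix.of_apply]
  rw [Fintype.sum_prod_type]
  exact Finset.sum_comm

lemma ptrA_liftA (W : Matrix B B ℂ) :
    ptrA (liftA A W) = (Fintype.card A : ℂ) • W := by
  ext b b'
  simp [ptrA, liftA_apply, Finset.sum_ite_eq, Matrix.smul_apply]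

lemma ptrA_one : ptrA (1 : Matrix (A × B) (A × B) ℂ) = (Fintype.card A : ℂ) • 1 := by
  rw [← ptrA_liftA (A := A) (1 : Matrix B B ℂ)]
  congr 1
  simp [liftA, Matrix.one_kronecker_one]

lemma trace_liftA_mul (W : Matrix B B ℂ) (Y : Matrix (A × B) (A × B) ℂ) :
    (liftA A W * Y).trace = (W * ptrA Y).trace := by
  have key : ∀ a b, (∑ a' : A, ∑ b' : B, if a = a' then W b b' * Y (a', b') (a, b) else 0)
      = ∑ b' : B, W b b' * Y (a, b') (a, b) := by
    intro a b
    rw [Finset.sum_comm]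
    simp
  simp only [Matrix.trace, Matrix.diag, Matrix.mul_apply, liftA_apply, ptrA_apply,
    Matrix.of_apply, Fintype.sum_prod_type, ite_mul, one_mul, zero_mul]
  simp only [key, Finset.mul_sum]
  rw [Finset.sum_comm]
  exact Finset.sum_congr rfl fun b _ => Finset.sum_comm

end Aux

section PSDFactor
open scoped MatrixOrder

lemma psd_exists_factor {n : Type*} [Fintype n] [DecidableEq n] {M : Matrix n n ℂ}
    (hM : M.PosSemidef) : ∃ C : Matrix n n ℂ, M = Cᴴ * C := by
  obtain ⟨X, hX, -, rfl⟩ :=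
    CFC.exists_sqrt_of_isSelfAdjoint_of_quasispectrumRestricts hM.1
      (QuasispectrumRestricts.nnreal_of_nonneg hM.nonneg)
  exact ⟨X, by rw [← Matrix.star_eq_conjTranspose, hX.star_eq]⟩

end PSDFactor

section PSD
open Kronecker
variable {n m : Type*} [Fintype n] [Fintype m] [DecidableEq n] [DecidableEq m]

lemma form_conjTranspose (M : Matrix n n ℂ) (x : n → ℂ) :
    star x ⬝ᵥ (Mᴴ *ᵥ x) = starRingEnd ℂ (star x ⬝ᵥ (M *ᵥ x)) := by
  simp only [dotProduct, Matrix.mulVec, Matrix.conjTranspose_apply, Pi.star_apply,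
    map_sum, _root_.map_mul, Finset.mul_sum]
  rw [Finset.sum_comm]
  refine Finset.sum_congr rfl fun i _ => Finset.sum_congr rfl fun j _ => ?_
  simp [RingHomInvPair.comp_apply_eq, Complex.conj_conj]
  ring

lemma isHermitian_form_real {M : Matrix n n ℂ} (hM : M.IsHermitian) (x : n → ℂ) :
    starRingEnd ℂ (star x ⬝ᵥ (M *ᵥ x)) = star x ⬝ᵥ (M *ᵥ x) := by
  conv_rhs => rw [← hM]
  rw [form_conjTranspose]

lemma posSemidef_of_re_form_nonneg {M : Matrix n n ℂ} (hM : M.IsHermitian)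
    (h : ∀ x : n → ℂ, 0 ≤ (star x ⬝ᵥ (M *ᵥ x)).re) : M.PosSemidef := by
  refine Matrix.PosSemidef.of_dotProduct_mulVec_nonneg hM fun x => ?_
  rw [Complex.le_def]
  have him := isHermitian_form_real hM x
  constructor
  · simpa using h x
  · have := congrArg Complex.im him
    simp only [Complex.conj_im, Complex.zero_im] at this ⊢
    linarith

lemma psd_diag_nonneg {M : Matrix n n ℂ} (hM : M.PosSemidef) (i : n) :
    0 ≤ M i i := by
  have := hM.dotProduct_mulVec_nonneg (Pi.single i 1)
  simpa [dotProduct, Matrix.mulVec, Pi.single_apply, Finset.sum_ite_eq,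
    Finset.sum_ite_eq'] using this

lemma psd_trace_nonneg {M : Matrix n n ℂ} (hM : M.PosSemidef) :
      0 ≤ M.trace :=
  Finset.sum_nonneg fun i _ => psd_diag_nonneg hM i

lemma trace_mul_nonneg {M N : Matrix n n ℂ} (hM : M.PosSemidef) (hN : N.PosSemidef) :
    0 ≤ (M * N).trace := by
  obtain ⟨C, rfl⟩ := psd_exists_factor hM
  rw [Matrix.mul_assoc, Matrix.trace_mul_comm]
  exact psd_trace_nonneg (hN.mul_mul_conjTranspose_same C)

lemma kron_conjTranspose (M : Matrix n n ℂ) (N : Matrix m m ℂ) :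
    (M ⊗ₖ N)ᴴ = Mᴴ ⊗ₖ Nᴴ := by
  ext p q
  cases p; cases q
  simp [Matrix.conjTranspose_apply]

lemma PosSemidef.kron {M : Matrix n n ℂ} {N : Matrix m m ℂ}
    (hM : M.PosSemidef) (hN : N.PosSemidef) : (M ⊗ₖ N).PosSemidef := by
  obtain ⟨C, rfl⟩ := psd_exists_factor hM
  obtain ⟨D, rfl⟩ := psd_exists_factor hN
  rw [Matrix.mul_kronecker_mul, ← kron_conjTranspose]
  exact Matrix.posSemidef_conjTranspose_mul_self _

lemma posSemidef_smul_real {M : Matrix n n ℂ} (hM : M.PosSemidef) {c : ℝ} (hc : 0 ≤ c) :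
    ((c : ℂ) • M).PosSemidef := by
  refine Matrix.PosSemidef.of_dotProduct_mulVec_nonneg ?_ ?_
  · have hs : star (c : ℂ) = (c : ℂ) := by
      rw [Complex.star_def, Complex.conj_ofReal]
    rw [Matrix.IsHermitian, Matrix.conjTranspose_smul, hM.1, hs]
  · intro x
    rw [Matrix.smul_mulVec, dotProduct_smul, smul_eq_mul]
    have h1 : (0 : ℂ) ≤ (c : ℂ) := by
      rw [Complex.le_def]; simp [hc]
    exact mul_nonneg h1 (hM.dotProduct_mulVec_nonneg x)

end PSD

section PSD2
open Kronecker
variable {n : Type*} [Fintype n] [DecidableEq n]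

lemma psd_entry_norm_le {Y : Matrix n n ℂ} (hY : Y.PosSemidef) (i j : n) :
    ‖Y i j‖ ≤ ((Y i i).re + (Y j j).re) / 2 := by
  obtain ⟨C, rfl⟩ := psd_exists_factor hY
  set v : EuclideanSpace ℂ n := (WithLp.equiv 2 (n → ℂ)).symm (fun k => C k i) with hv
  set w : EuclideanSpace ℂ n := (WithLp.equiv 2 (n → ℂ)).symm (fun k => C k j) with hw
  have hiv : inner ℂ v w = (Cᴴ * C) i j := by
    simp [hv, hw, PiLp.inner_apply, Matrix.mul_apply, Matrix.conjTranspose_apply, RCLike.inner_apply,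
      mul_comm]
  have hvv : ‖v‖ ^ 2 = ((Cᴴ * C) i i).re := by
    rw [← hiv] at *
    rw [InnerProductSpace.norm_sq_eq_re_inner (𝕜 := ℂ)]
    have : inner ℂ v v = (Cᴴ * C) i i := by
      simp [hv, -inner_self_eq_norm_sq_to_K, PiLp.inner_apply, Matrix.mul_apply, Matrix.conjTranspose_apply, RCLike.inner_apply,
        mul_comm]
    rw [this]
    simp
  have hww : ‖w‖ ^ 2 = ((Cᴴ * C) j j).re := by
    rw [InnerProductSpace.norm_sq_eq_re_inner (𝕜 := ℂ)]
    have : inner ℂ w w = (Cᴴ * C) j j := by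
      simp [hw, -inner_self_eq_norm_sq_to_K, PiLp.inner_apply, Matrix.mul_apply, Matrix.conjTranspose_apply, RCLike.inner_apply,
        mul_comm]
    rw [this]
    simp
  have h1 : ‖(Cᴴ * C) i j‖ ≤ ‖v‖ * ‖w‖ := by
    rw [← hiv]
    exact norm_inner_le_norm v w
  have h2 : ‖v‖ * ‖w‖ ≤ (‖v‖ ^ 2 + ‖w‖ ^ 2) / 2 := by nlinarith [sq_nonneg (‖v‖ - ‖w‖)]
  rw [hvv, hww] at h2
  linarith

lemma psd_entry_norm_le_trace {Y : Matrix n n ℂ} (hY : Y.PosSemidef) (i j : n) :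
    ‖Y i j‖ ≤ Y.trace.re := by
  have h := psd_entry_norm_le hY i j
  have hd : ∀ k : n, 0 ≤ (Y k k).re := fun k => (Complex.le_def.mp (psd_diag_nonneg hY k)).1
  have hi : (Y i i).re ≤ Y.trace.re := by
    rw [Matrix.trace, Complex.re_sum]
    exact Finset.single_le_sum (fun k _ => hd k) (Finset.mem_univ i)
  have hj : (Y j j).re ≤ Y.trace.re := by
    rw [Matrix.trace, Complex.re_sum]
    exact Finset.single_le_sum (fun k _ => hd k) (Finset.mem_univ j)
  linarith

lemma herm_smul_one_add_posSemidef {E : Matrix n n ℂ} (hE : E.IsHermitian) {δ : ℝ}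
    (hδ : ∑ i, ∑ j, ‖E i j‖ ≤ δ) : ((δ : ℂ) • 1 + E).PosSemidef := by
  have hherm : ((δ : ℂ) • (1 : Matrix n n ℂ) + E).IsHermitian := by
    refine Matrix.IsHermitian.add ?_ hE
    rw [Matrix.IsHermitian, Matrix.conjTranspose_smul, Matrix.conjTranspose_one,
      Complex.star_def, Complex.conj_ofReal]
  refine posSemidef_of_re_form_nonneg hherm fun x => ?_
  have hsplit : star x ⬝ᵥ (((δ : ℂ) • 1 + E) *ᵥ x)
      = (δ : ℂ) * (star x ⬝ᵥ x) + star x ⬝ᵥ (E *ᵥ x) := by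
    rw [Matrix.add_mulVec, dotProduct_add, Matrix.smul_mulVec,
      Matrix.one_mulVec, dotProduct_smul, smul_eq_mul]
  rw [hsplit]
  set S : ℝ := ∑ k, ‖x k‖ ^ 2 with hS
  have hSnonneg : 0 ≤ S := Finset.sum_nonneg fun k _ => sq_nonneg _
  have hdot : star x ⬝ᵥ x = ((S : ℝ) : ℂ) := by
    rw [hS]
    push_cast
    simp only [dotProduct, Pi.star_apply, Complex.star_def]
    refine Finset.sum_congr rfl fun k _ => ?_
    rw [mul_comm, Complex.mul_conj]
    norm_cast
    rw [← Complex.sq_norm]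
  have hxx : ((δ : ℂ) * (star x ⬝ᵥ x)).re = δ * S := by
    rw [hdot, ← Complex.ofReal_mul]
    exact Complex.ofReal_re _
  have hk2 : ∀ k, ‖x k‖ ^ 2 ≤ S :=
    fun k => Finset.single_le_sum (f := fun k => ‖x k‖ ^ 2)
      (fun l _ => sq_nonneg _) (Finset.mem_univ k)
  have hnorm : ‖star x ⬝ᵥ (E *ᵥ x)‖ ≤ δ * S := by
    have e1 : star x ⬝ᵥ (E *ᵥ x) = ∑ i, ∑ j, starRingEnd ℂ (x i) * (E i j * x j) := by
      simp only [dotProduct, Matrix.mulVec, Pi.star_apply, Complex.star_def,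
        Finset.mul_sum]
    rw [e1]
    have e2 : ‖∑ i, ∑ j, starRingEnd ℂ (x i) * (E i j * x j)‖
        ≤ ∑ i, ∑ j, ‖x i‖ * (‖E i j‖ * ‖x j‖) := by
      refine (norm_sum_le _ _).trans (Finset.sum_le_sum fun i _ => ?_)
      refine (norm_sum_le _ _).trans (Finset.sum_le_sum fun j _ => ?_)
      rw [norm_mul, norm_mul, RCLike.norm_conj]
    refine e2.trans ?_
    have e3 : ∀ i j : n, ‖x i‖ * (‖E i j‖ * ‖x j‖) ≤ ‖E i j‖ * S := by
      intro i j
      have h1 : ‖x i‖ * ‖x j‖ ≤ S := by nlinarith [hk2 i, hk2 j, sq_nonneg (‖x i‖ - ‖x j‖)]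
      have h2 : 0 ≤ ‖E i j‖ := norm_nonneg _
      nlinarith
    have c1 : ∑ i, ∑ j, ‖x i‖ * (‖E i j‖ * ‖x j‖) ≤ ∑ i, ∑ j, ‖E i j‖ * S :=
      Finset.sum_le_sum fun i _ => Finset.sum_le_sum fun j _ => e3 i j
    have c2 : ∑ i : n, ∑ j : n, ‖E i j‖ * S = (∑ i : n, ∑ j : n, ‖E i j‖) * S := by
      rw [Finset.sum_mul]
      exact Finset.sum_congr rfl fun i _ => (Finset.sum_mul _ _ _).symm
    have c3 : (∑ i : n, ∑ j : n, ‖E i j‖) * S ≤ δ * S := mul_le_mul_of_nonneg_right hδ hSnonneg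
    linarith
  have hre : -(δ * S) ≤ (star x ⬝ᵥ (E *ᵥ x)).re := by
    have h1 : |(star x ⬝ᵥ (E *ᵥ x)).re| ≤ ‖star x ⬝ᵥ (E *ᵥ x)‖ := Complex.abs_re_le_norm _
    have h2 := neg_abs_le ((star x ⬝ᵥ (E *ᵥ x)).re)
    linarith
  rw [Complex.add_re, hxx]
  linarith

end PSD2


section Lift
open Kronecker
variable {A B : Type*} [Fintype A] [Fintype B] [DecidableEq A] [DecidableEq B]

lemma liftA_conjTranspose (W : Matrix B B ℂ) : (liftA A W)ᴴ = liftA A Wᴴ := by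
  rw [liftA, liftA, kron_conjTranspose, Matrix.conjTranspose_one]

lemma liftA_add (W V : Matrix B B ℂ) : liftA A (W + V) = liftA A W + liftA A V := by
  ext p q
  simp [liftA_apply, mul_add]

lemma liftA_smul (c : ℂ) (W : Matrix B B ℂ) : liftA A (c • W) = c • liftA A W := by
  ext p q
  simp only [liftA_apply, Matrix.smul_apply, smul_eq_mul]
  ring

lemma liftA_posSemidef {W : Matrix B B ℂ} (hW : W.PosSemidef) : (liftA A W).PosSemidef :=
  PosSemidef.kron Matrix.PosSemidef.one hW

lemma posSemidef_of_liftA [Nonempty A] {W : Matrix B B ℂ}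
    (hW : (liftA A W).PosSemidef) : W.PosSemidef := by
  obtain ⟨a₀⟩ := ‹Nonempty A›
  refine Matrix.PosSemidef.of_dotProduct_mulVec_nonneg ?_ ?_
  · have h := hW.1
    rw [Matrix.IsHermitian] at h ⊢
    ext b b'
    have := congrFun (congrFun h (a₀, b)) (a₀, b')
    simpa [Matrix.conjTranspose_apply, liftA_apply] using this
  · intro v
    have h := hW.dotProduct_mulVec_nonneg (fun p => if p.1 = a₀ then v p.2 else 0)
    have e : (star (fun p : A × B => if p.1 = a₀ then v p.2 else 0)) ⬝ᵥ
        (liftA A W *ᵥ (fun p : A × B => if p.1 = a₀ then v p.2 else 0))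
        = star v ⬝ᵥ (W *ᵥ v) := by
      simp only [dotProduct, Matrix.mulVec, Pi.star_apply, liftA_apply,
        Fintype.sum_prod_type]
      rw [Finset.sum_eq_single a₀]
      · simp only [if_true]
        refine Finset.sum_congr rfl fun b _ => ?_
        congr 1
        rw [Finset.sum_eq_single a₀]
        · simp
        · intro a _ ha
          simp [ha, Ne.symm ha]
        · intro h; exact absurd (Finset.mem_univ a₀) h
      · intro a _ ha
        simp [ha]
      · intro h; exact absurd (Finset.mem_univ a₀) h
    rw [e] at h
    exact h

lemma ptrA_isHermitian {Y : Matrix (A × B) (A × B) ℂ} (hY : Y.IsHermitian) :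
    (ptrA Y).IsHermitian := by
  rw [Matrix.IsHermitian]
  ext b b'
  rw [Matrix.conjTranspose_apply, ptrA_apply, ptrA_apply, star_sum]
  refine Finset.sum_congr rfl fun a _ => ?_
  rw [← Matrix.conjTranspose_apply, hY]

end Lift


section MSF
open Kronecker
variable {A B : Type*} [Fintype A] [Fintype B] [DecidableEq A] [DecidableEq B]

/-- The feasible-value set of the msf SDP. -/
def msfSet (ρ : Matrix (A × B) (A × B) ℂ) : Set ℝ :=
  { x : ℝ | ∃ Y : Matrix (A × B) (A × B) ℂ, Y.PosSemidef ∧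
    ptrA Y = ((Fintype.card A : ℂ))⁻¹ • (1 : Matrix B B ℂ) ∧
    x = ((ρ * Y).trace).re }

lemma msf_eq_sSup (ρ : Matrix (A × B) (A × B) ℂ) : msf ρ = sSup (msfSet ρ) := rfl

lemma trace_of_feasible {Y : Matrix (A × B) (A × B) ℂ}
    (hfeas : ptrA Y = ((Fintype.card A : ℂ))⁻¹ • (1 : Matrix B B ℂ)) :
    Y.trace = ((Fintype.card A : ℂ))⁻¹ * (Fintype.card B : ℂ) := by
  rw [← trace_ptrA, hfeas, Matrix.trace_smul, Matrix.trace_one, smul_eq_mul]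

lemma v0_mem_msfSet [Nonempty A] {ρ : Matrix (A × B) (A × B) ℂ} (hρtr : ρ.trace = 1) :
    (Fintype.card A : ℝ)⁻¹ * (Fintype.card A : ℝ)⁻¹ ∈ msfSet ρ := by
  have hA0 : (0 : ℝ) < (Fintype.card A : ℝ) := by
    exact_mod_cast Fintype.card_pos
  have hAne : ((Fintype.card A : ℂ)) ≠ 0 := Nat.cast_ne_zero.mpr Fintype.card_ne_zero
  refine ⟨(((Fintype.card A : ℝ)⁻¹ * (Fintype.card A : ℝ)⁻¹ : ℝ) : ℂ) • 1, ?_, ?_, ?_⟩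
  · exact posSemidef_smul_real Matrix.PosSemidef.one
      (by positivity)
  · rw [ptrA_smul, ptrA_one, smul_smul]
    congr 1
    push_cast
    field_simp
  · rw [Matrix.mul_smul, Matrix.mul_one, Matrix.trace_smul, hρtr, smul_eq_mul, mul_one]
    push_cast
    simp

lemma msfSet_bddAbove (ρ : Matrix (A × B) (A × B) ℂ) : BddAbove (msfSet ρ) := by
  refine ⟨(∑ p : A × B, ∑ q : A × B, ‖ρ p q‖) * |((Fintype.card A : ℝ)⁻¹ * (Fintype.card B : ℝ))|,
    fun x hx => ?_⟩
  obtain ⟨Y, hY, hfeas, rfl⟩ := hx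
  have htr : Y.trace.re = (Fintype.card A : ℝ)⁻¹ * (Fintype.card B : ℝ) := by
    rw [trace_of_feasible hfeas]
    push_cast
    simp
  have h1 : ((ρ * Y).trace).re ≤ ‖(ρ * Y).trace‖ := by
    have := Complex.abs_re_le_norm ((ρ * Y).trace)
    have h2 := le_abs_self ((ρ * Y).trace).re
    exact h2.trans this
  refine h1.trans ?_
  have h2 : (ρ * Y).trace = ∑ p : A × B, ∑ q : A × B, ρ p q * Y q p := by
    simp only [Matrix.trace, Matrix.diag, Matrix.mul_apply]
  rw [h2]
  have h3 : ‖∑ p : A × B, ∑ q : A × B, ρ p q * Y q p‖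
      ≤ ∑ p : A × B, ∑ q : A × B, ‖ρ p q‖ * ‖Y q p‖ := by
    refine (norm_sum_le _ _).trans (Finset.sum_le_sum fun p _ => ?_)
    refine (norm_sum_le _ _).trans (Finset.sum_le_sum fun q _ => ?_)
    rw [norm_mul]
  refine h3.trans ?_
  have h4 : ∀ p q : A × B, ‖ρ p q‖ * ‖Y q p‖
      ≤ ‖ρ p q‖ * |(Fintype.card A : ℝ)⁻¹ * (Fintype.card B : ℝ)| := by
    intro p q
    refine mul_le_mul_of_nonneg_left ?_ (norm_nonneg _)
    refine (psd_entry_norm_le_trace hY q p).trans ?_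
    rw [htr]
    exact le_abs_self _
  calc ∑ p : A × B, ∑ q : A × B, ‖ρ p q‖ * ‖Y q p‖
      ≤ ∑ p : A × B, ∑ q : A × B, ‖ρ p q‖ * |(Fintype.card A : ℝ)⁻¹ * (Fintype.card B : ℝ)| :=
        Finset.sum_le_sum fun p _ => Finset.sum_le_sum fun q _ => h4 p q
    _ = (∑ p : A × B, ∑ q : A × B, ‖ρ p q‖) * |(Fintype.card A : ℝ)⁻¹ * (Fintype.card B : ℝ)| := by
        rw [Finset.sum_mul]
        exact Finset.sum_congr rfl fun p _ => (Finset.sum_mul _ _ _).symm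

lemma msf_nonneg [Nonempty A] {ρ : Matrix (A × B) (A × B) ℂ} (hρtr : ρ.trace = 1) :
    (Fintype.card A : ℝ)⁻¹ * (Fintype.card A : ℝ)⁻¹ ≤ msf ρ :=
  le_csSup (msfSet_bddAbove ρ) (v0_mem_msfSet hρtr)

lemma value_le_dual {ρ W : Matrix (A × B) (A × B) ℂ} : True := trivial

/-- Weak duality. -/
lemma value_le_of_dual {ρ : Matrix (A × B) (A × B) ℂ} {W : Matrix B B ℂ}
    (hW : (liftA A W - ρ).PosSemidef) {Y : Matrix (A × B) (A × B) ℂ}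
    (hY : Y.PosSemidef) (hfeas : ptrA Y = ((Fintype.card A : ℂ))⁻¹ • (1 : Matrix B B ℂ)) :
    ((ρ * Y).trace).re ≤ (Fintype.card A : ℝ)⁻¹ * W.trace.re := by
  have h0 : 0 ≤ (((liftA A W - ρ) * Y).trace).re :=
    (Complex.le_def.mp (trace_mul_nonneg hW hY)).1
  have h1 : ((liftA A W - ρ) * Y).trace = (liftA A W * Y).trace - (ρ * Y).trace := by
    rw [Matrix.sub_mul, Matrix.trace_sub]
  have h2 : (liftA A W * Y).trace = ((Fintype.card A : ℂ))⁻¹ * W.trace := by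
    rw [trace_liftA_mul, hfeas, Matrix.mul_smul, Matrix.mul_one, Matrix.trace_smul, smul_eq_mul]
  have h3 : (((Fintype.card A : ℂ))⁻¹ * W.trace).re = (Fintype.card A : ℝ)⁻¹ * W.trace.re := by
    have : ((Fintype.card A : ℂ))⁻¹ = (((Fintype.card A : ℝ)⁻¹ : ℝ) : ℂ) := by push_cast; ring
    rw [this, Complex.re_ofReal_mul]
  rw [h1, Complex.sub_re, h2, h3] at h0
  linarith

/-- Feasibility repair: the value of an approximately feasible `Y` is controlled by `msf`. -/
lemma value_le_repair [Nonempty A] {ρ : Matrix (A × B) (A × B) ℂ}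
    (hρ : ρ.PosSemidef) (hρtr : ρ.trace = 1)
    {Y : Matrix (A × B) (A × B) ℂ} (hY : Y.PosSemidef) :
    ((ρ * Y).trace).re ≤ (1 + (Fintype.card A : ℝ) *
      (∑ b : B, ∑ b' : B, ‖(ptrA Y - ((Fintype.card A : ℂ))⁻¹ • (1 : Matrix B B ℂ)) b b'‖)) *
      msf ρ := by
  classical
  set dA : ℝ := (Fintype.card A : ℝ) with hdA
  have hA0 : (0 : ℝ) < dA := by rw [hdA]; exact_mod_cast Fintype.card_pos
  have hAne : ((Fintype.card A : ℂ)) ≠ 0 := Nat.cast_ne_zero.mpr Fintype.card_ne_zero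
  set δ : ℝ := ∑ b : B, ∑ b' : B,
    ‖(ptrA Y - ((Fintype.card A : ℂ))⁻¹ • (1 : Matrix B B ℂ)) b b'‖ with hδdef
  have hδ0 : 0 ≤ δ := Finset.sum_nonneg fun b _ => Finset.sum_nonneg fun b' _ => norm_nonneg _
  set E : Matrix B B ℂ := ((Fintype.card A : ℂ))⁻¹ • (1 : Matrix B B ℂ) - ptrA Y with hEdef
  have hE : E.IsHermitian := by
    refine Matrix.IsHermitian.sub ?_ (ptrA_isHermitian hY.1)
    rw [Matrix.IsHermitian, Matrix.conjTranspose_smul, Matrix.conjTranspose_one]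
    congr 1
    rw [show ((Fintype.card A : ℂ))⁻¹ = (((dA⁻¹ : ℝ)) : ℂ) by rw [hdA]; push_cast; ring]
    rw [Complex.star_def, Complex.conj_ofReal]
  have hEnorm : ∑ b : B, ∑ b' : B, ‖E b b'‖ ≤ δ := by
    rw [hδdef]
    refine le_of_eq (Finset.sum_congr rfl fun b _ => Finset.sum_congr rfl fun b' _ => ?_)
    rw [hEdef, show ((Fintype.card A : ℂ))⁻¹ • (1 : Matrix B B ℂ) - ptrA Y
      = -(ptrA Y - ((Fintype.card A : ℂ))⁻¹ • (1 : Matrix B B ℂ)) by rw [neg_sub]]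
    rw [Matrix.neg_apply, norm_neg]
  have hD : ((δ : ℂ) • 1 + E).PosSemidef := herm_smul_one_add_posSemidef hE hEnorm
  set D : Matrix B B ℂ := (δ : ℂ) • 1 + E with hDdef
  set Z : Matrix (A × B) (A × B) ℂ := ((Fintype.card A : ℂ))⁻¹ • liftA A D with hZdef
  have hZ : Z.PosSemidef := by
    rw [hZdef, show ((Fintype.card A : ℂ))⁻¹ = (((dA⁻¹ : ℝ)) : ℂ) by rw [hdA]; push_cast; ring]
    exact posSemidef_smul_real (liftA_posSemidef hD) (by positivity)
  set c : ℝ := (1 + dA * δ)⁻¹ with hcdef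
  have hcpos : 0 < c := by
    rw [hcdef]
    have : 0 < 1 + dA * δ := by nlinarith
    positivity
  set Yf : Matrix (A × B) (A × B) ℂ := ((c : ℝ) : ℂ) • (Y + Z) with hYfdef
  have hYf : Yf.PosSemidef := posSemidef_smul_real (hY.add hZ) hcpos.le
  have hfeas : ptrA Yf = ((Fintype.card A : ℂ))⁻¹ • (1 : Matrix B B ℂ) := by
    rw [hYfdef, ptrA_smul, ptrA_add, hZdef, ptrA_smul, ptrA_liftA, smul_smul,
      inv_mul_cancel₀ hAne, one_smul, hDdef, hEdef]
    have : ptrA Y + ((δ : ℂ) • 1 + (((Fintype.card A : ℂ))⁻¹ • 1 - ptrA Y))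
        = ((δ : ℂ) + ((Fintype.card A : ℂ))⁻¹) • (1 : Matrix B B ℂ) := by
      rw [add_smul]
      abel
    rw [this, smul_smul]
    congr 1
    have hdne : dA ≠ 0 := ne_of_gt hA0
    have h6pos : (0:ℝ) < 1 + dA * δ := by nlinarith
    have hreal : c * (δ + dA⁻¹) = dA⁻¹ := by
      rw [hcdef]
      rw [inv_mul_eq_iff_eq_mul₀ (ne_of_gt h6pos)]
      field_simp
      ring
    have hcast := congrArg (Complex.ofReal) hreal
    push_cast at hcast
    rw [show ((Fintype.card A : ℂ)) = ((dA : ℝ) : ℂ) by rw [hdA]; push_cast; ring]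
    exact_mod_cast hcast
  have hw2 : 0 ≤ ((ρ * Z).trace).re := (Complex.le_def.mp (trace_mul_nonneg hρ hZ)).1
  have hval : ((ρ * Yf).trace).re = c * (((ρ * Y).trace).re + ((ρ * Z).trace).re) := by
    rw [hYfdef, Matrix.mul_smul, Matrix.mul_add, Matrix.trace_smul, Matrix.trace_add]
    rw [smul_eq_mul, Complex.re_ofReal_mul, Complex.add_re]
  have hmem : ((ρ * Yf).trace).re ∈ msfSet ρ := ⟨Yf, hYf, hfeas, rfl⟩
  have hle : ((ρ * Yf).trace).re ≤ msf ρ := le_csSup (msfSet_bddAbove ρ) hmem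
  rw [hval] at hle
  have h5 : ((ρ * Y).trace).re + ((ρ * Z).trace).re ≤ (1 + dA * δ) * msf ρ := by
    rw [hcdef] at hle
    have h6 : 0 < 1 + dA * δ := by nlinarith
    rw [inv_mul_le_iff₀ h6] at hle
    exact hle
  linarith

end MSF


section Sep
open Kronecker
variable {A B : Type*} [Fintype A] [Fintype B] [DecidableEq A] [DecidableEq B]

lemma trace_liftA (W : Matrix B B ℂ) :
    (liftA A W).trace = (Fintype.card A : ℂ) * W.trace := by
  rw [liftA, Matrix.trace_kronecker, Matrix.trace_one]

lemma outer_posSemidef (v : (A × B) → ℂ) :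
    (Matrix.of fun p q => v p * star (v q) : Matrix (A × B) (A × B) ℂ).PosSemidef := by
  have : (Matrix.of fun p q => v p * star (v q) : Matrix (A × B) (A × B) ℂ)
      = (Matrix.of fun (_ : Unit) q => star (v q))ᴴ * (Matrix.of fun (_ : Unit) q => star (v q)) := by
    ext p q
    simp [Matrix.mul_apply, Matrix.conjTranspose_apply]
  rw [this]
  exact Matrix.posSemidef_conjTranspose_mul_self _

lemma trace_mul_outer (G : Matrix (A × B) (A × B) ℂ) (v : (A × B) → ℂ) :
    (G * Matrix.of fun p q => v p * star (v q)).trace = star v ⬝ᵥ (G *ᵥ v) := by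
  simp only [Matrix.trace, Matrix.diag, Matrix.mul_apply, Matrix.of_apply, dotProduct,
    Matrix.mulVec, Pi.star_apply]
  refine Finset.sum_congr rfl fun p _ => ?_
  rw [Finset.mul_sum]
  refine Finset.sum_congr rfl fun q _ => ?_
  ring

set_option maxHeartbeats 2000000 in
/-- Strong duality via hyperplane separation: near-optimal dual witnesses exist. -/
lemma dual_exists [Nonempty A] [Nonempty B] {ρ : Matrix (A × B) (A × B) ℂ}
    (hρ : ρ.PosSemidef) (hρtr : ρ.trace = 1) {ε : ℝ} (hε : 0 < ε) :
    ∃ W : Matrix B B ℂ, W.PosSemidef ∧ (liftA A W - ρ).PosSemidef ∧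
      W.trace.re ≤ (Fintype.card A : ℝ) * (msf ρ + ε) := by
  classical
  set dA : ℝ := (Fintype.card A : ℝ) with hdA
  have hA0 : (0 : ℝ) < dA := by rw [hdA]; exact_mod_cast Fintype.card_pos
  have hAne : ((Fintype.card A : ℂ)) ≠ 0 := Nat.cast_ne_zero.mpr Fintype.card_ne_zero
  set p : ℝ := msf ρ with hp
  have hp0 : 0 ≤ p := le_trans (by positivity) (msf_nonneg hρtr)
  set Lmap : Matrix (A × B) (A × B) ℂ → EuclideanSpace ℝ (((B × B) × Fin 2) ⊕ Unit) :=
    fun Y => (WithLp.equiv 2 _).symm (Sum.elim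
      (fun q => if q.2 = 0 then (ptrA Y q.1.1 q.1.2).re else (ptrA Y q.1.1 q.1.2).im)
      (fun _ => ((ρ * Y).trace).re)) with hLmap
  have hLadd : ∀ Y Z, Lmap (Y + Z) = Lmap Y + Lmap Z := by
    intro Y Z
    ext i
    cases' i with q u
    · simp only [hLmap, WithLp.equiv_symm_apply, WithLp.ofLp_toLp, Sum.elim_inl, PiLp.add_apply, ptrA_add,
        Matrix.add_apply, Complex.add_re, Complex.add_im]
      split <;> simp
    · simp only [hLmap, WithLp.equiv_symm_apply, WithLp.ofLp_toLp, Sum.elim_inr, PiLp.add_apply,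
        Matrix.mul_add, Matrix.trace_add, Complex.add_re]
  have hLsmul : ∀ (c : ℝ) (Y), Lmap ((c : ℂ) • Y) = c • Lmap Y := by
    intro c Y
    ext i
    cases' i with q u
    · simp only [hLmap, WithLp.equiv_symm_apply, WithLp.ofLp_toLp, Sum.elim_inl, PiLp.smul_apply, ptrA_smul,
        Matrix.smul_apply, smul_eq_mul, Complex.re_ofReal_mul, Complex.im_ofReal_mul]
      split <;> rfl
    · simp only [hLmap, WithLp.equiv_symm_apply, WithLp.ofLp_toLp, Sum.elim_inr, PiLp.smul_apply,
        Matrix.mul_smul, Matrix.trace_smul, smul_eq_mul, Complex.re_ofReal_mul]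
  set K : ConvexCone ℝ (EuclideanSpace ℝ (((B × B) × Fin 2) ⊕ Unit)) :=
    { carrier := Lmap '' {Y | Y.PosSemidef}
      smul_mem' := by
        rintro c hc x ⟨Y, hY, rfl⟩
        exact ⟨(c : ℂ) • Y, posSemidef_smul_real hY hc.le, hLsmul c Y⟩
      add_mem' := by
        rintro x ⟨Y, hY, rfl⟩ z ⟨Z, hZ, rfl⟩
        exact ⟨Y + Z, hY.add hZ, hLadd Y Z⟩ } with hK
  set b₀ : EuclideanSpace ℝ (((B × B) × Fin 2) ⊕ Unit) :=
    (WithLp.equiv 2 _).symm (Sum.elim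
      (fun q => if q.2 = 0 then (if q.1.1 = q.1.2 then dA⁻¹ else 0) else 0)
      (fun _ => p + ε)) with hb₀def
  -- b₀ is not in the closure of K
  have hb₀ : b₀ ∉ closure (K : Set (EuclideanSpace ℝ (((B × B) × Fin 2) ⊕ Unit))) := by
    intro hmem
    set cB : ℝ := (Fintype.card B : ℝ) with hcB
    have hcB0 : (0 : ℝ) ≤ cB := by positivity
    set M : ℝ := 1 + 2 * dA * cB ^ 2 * p with hM
    have hM0 : 0 < M := by
      have h8 : (0:ℝ) ≤ 2 * dA * cB ^ 2 * p :=
        mul_nonneg (mul_nonneg (mul_nonneg (by norm_num) hA0.le) (sq_nonneg cB)) hp0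
      rw [hM]; linarith
    set r : ℝ := ε / (M + 1) with hr
    have hr0 : 0 < r := by positivity
    obtain ⟨x, hxK, hdist⟩ := Metric.mem_closure_iff.mp hmem r hr0
    obtain ⟨Y, hY, rfl⟩ := hxK
    have hcoord : ∀ i, |b₀ i - Lmap Y i| ≤ r := by
      intro i
      have h1 : |b₀ i - Lmap Y i| ≤ dist b₀ (Lmap Y) := by
        rw [EuclideanSpace.dist_eq, show |b₀ i - Lmap Y i|
          = Real.sqrt (|b₀ i - Lmap Y i| ^ 2) by rw [Real.sqrt_sq_eq_abs, abs_abs]]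
        apply Real.sqrt_le_sqrt
        have : |b₀ i - Lmap Y i| = dist (b₀ i) (Lmap Y i) := rfl
        rw [this]
        exact Finset.single_le_sum (f := fun j => dist (b₀ j) (Lmap Y j) ^ 2)
          (fun j _ => sq_nonneg _) (Finset.mem_univ i)
      exact h1.trans hdist.le
    -- entrywise deviation bound
    have hδbound : ∑ b : B, ∑ b' : B,
        ‖(ptrA Y - ((Fintype.card A : ℂ))⁻¹ • (1 : Matrix B B ℂ)) b b'‖ ≤ 2 * cB ^ 2 * r := by
      have hentry : ∀ b b' : B,
          ‖(ptrA Y - ((Fintype.card A : ℂ))⁻¹ • (1 : Matrix B B ℂ)) b b'‖ ≤ 2 * r := by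
        intro b b'
        set z : ℂ := (ptrA Y - ((Fintype.card A : ℂ))⁻¹ • (1 : Matrix B B ℂ)) b b' with hz
        have hre : |z.re| ≤ r := by
          have := hcoord (Sum.inl ((b, b'), 0))
          have he : b₀ (Sum.inl ((b, b'), (0 : Fin 2))) - Lmap Y (Sum.inl ((b, b'), (0 : Fin 2)))
              = -z.re := by
            simp only [hb₀def, hLmap, WithLp.equiv_symm_apply, WithLp.ofLp_toLp, Sum.elim_inl, if_true, hz,
              Matrix.sub_apply, Matrix.smul_apply, Matrix.one_apply, Complex.sub_re,
              smul_eq_mul]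
            have : (((Fintype.card A : ℂ))⁻¹ * (if b = b' then (1:ℂ) else 0)).re
                = (if b = b' then dA⁻¹ else 0) := by
              split <;> simp [hdA]
            rw [this]
            ring
          rw [he, abs_neg] at this
          exact this
        have him : |z.im| ≤ r := by
          have := hcoord (Sum.inl ((b, b'), 1))
          have he : b₀ (Sum.inl ((b, b'), (1 : Fin 2))) - Lmap Y (Sum.inl ((b, b'), (1 : Fin 2)))
              = -z.im := by
            simp only [hb₀def, hLmap, WithLp.equiv_symm_apply, WithLp.ofLp_toLp, Sum.elim_inl, hz,
              Matrix.sub_apply, Matrix.smul_apply, Matrix.one_apply, Complex.sub_im,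
              smul_eq_mul]
            norm_num
            split <;> simp
          rw [he, abs_neg] at this
          exact this
        calc ‖z‖ ≤ |z.re| + |z.im| := Complex.norm_le_abs_re_add_abs_im z
          _ ≤ 2 * r := by linarith
      calc ∑ b : B, ∑ b' : B, ‖(ptrA Y - ((Fintype.card A : ℂ))⁻¹ • (1 : Matrix B B ℂ)) b b'‖
          ≤ ∑ _b : B, ∑ _b' : B, 2 * r :=
            Finset.sum_le_sum fun b _ => Finset.sum_le_sum fun b' _ => hentry b _
        _ = 2 * cB ^ 2 * r := by
            simp [Finset.sum_const, hcB]
            ring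
    -- value coordinate is close to p + ε
    have hval : p + ε - r ≤ ((ρ * Y).trace).re := by
      have := hcoord (Sum.inr ())
      have he : b₀ (Sum.inr ()) = p + ε := rfl
      have he2 : Lmap Y (Sum.inr ()) = ((ρ * Y).trace).re := rfl
      rw [he, he2] at this
      have := abs_le.mp this
      linarith [this.1]
    -- repair bound
    have hrep := value_le_repair hρ hρtr hY
    have hδ0 : (0:ℝ) ≤ ∑ b : B, ∑ b' : B,
        ‖(ptrA Y - ((Fintype.card A : ℂ))⁻¹ • (1 : Matrix B B ℂ)) b b'‖ :=
      Finset.sum_nonneg fun b _ => Finset.sum_nonneg fun b' _ => norm_nonneg _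
    have hbig : ((ρ * Y).trace).re ≤ (1 + dA * (2 * cB ^ 2 * r)) * p := by
      refine hrep.trans ?_
      have : 1 + dA * (∑ b : B, ∑ b' : B,
          ‖(ptrA Y - ((Fintype.card A : ℂ))⁻¹ • (1 : Matrix B B ℂ)) b b'‖)
          ≤ 1 + dA * (2 * cB ^ 2 * r) := by nlinarith
      nlinarith
    -- contradiction
    have hfin : ε ≤ r * M := by nlinarith [hval, hbig]
    have h7 : r * (M + 1) = ε := by
      rw [hr]
      field_simp
    nlinarith [hr0]
  -- apply hyperplane separation to the closure of K
  have hKne : ((K.closure : Set (EuclideanSpace ℝ (((B × B) × Fin 2) ⊕ Unit)))).Nonempty :=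
    ⟨Lmap 0, subset_closure ⟨0, Matrix.PosSemidef.zero, rfl⟩⟩
  have hKcl : IsClosed ((K.closure : Set (EuclideanSpace ℝ (((B × B) × Fin 2) ⊕ Unit)))) := by
    rw [ConvexCone.coe_closure]
    exact isClosed_closure
  have hbK : b₀ ∉ K.closure := by
    rw [ConvexCone.mem_closure]
    exact hb₀
  have hpt : K.closure.Pointed := by
    have h0 := hLsmul 0 0
    rw [Complex.ofReal_zero, zero_smul, zero_smul] at h0
    show (0 : EuclideanSpace ℝ (((B × B) × Fin 2) ⊕ Unit)) ∈ K.closure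
    rw [← h0, ConvexCone.mem_closure]
    exact subset_closure ⟨0, Matrix.PosSemidef.zero, rfl⟩
  obtain ⟨y, hy1, hy2'⟩ := ProperCone.hyperplane_separation'
    ({ toSubmodule := K.closure.toPointedCone hpt, isClosed' := hKcl } :
      ProperCone ℝ (EuclideanSpace ℝ (((B × B) × Fin 2) ⊕ Unit))) hbK
  have hy2 : inner ℝ y b₀ < 0 := by rwa [real_inner_comm]
  -- decode the separating functional
  set N : Matrix B B ℂ :=
    Matrix.of (fun b b' => (⟨y (Sum.inl ((b, b'), 0)), y (Sum.inl ((b, b'), 1))⟩ : ℂ)) with hN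
  set c' : ℝ := y (Sum.inr ()) with hc'
  -- evaluate the inner product against Lmap Y
  have hinner : ∀ Y : Matrix (A × B) (A × B) ℂ, (ptrA Y).IsHermitian →
      inner ℝ (Lmap Y) y
        = ((N * ptrA Y).trace).re + ((ρ * Y).trace).re * c' := by
    intro Y hS
    have hsym : ∀ b b' : B, ptrA Y b' b = starRingEnd ℂ (ptrA Y b b') := by
      intro b b'
      have := congrFun (congrFun hS b') b
      rw [← this]
      rfl
    rw [PiLp.inner_apply]
    simp only [RCLike.inner_apply', starRingEnd_apply, star_trivial]
    rw [Fintype.sum_sum_type]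
    have hunit : ∑ u : Unit, Lmap Y (Sum.inr u) * y (Sum.inr u) = ((ρ * Y).trace).re * c' := by
      rw [Fintype.sum_unique]
      rfl
    rw [hunit]
    congr 1
    have htr : (N * ptrA Y).trace = ∑ b : B, ∑ b' : B, N b b' * ptrA Y b' b := by
      simp only [Matrix.trace, Matrix.diag, Matrix.mul_apply]
    rw [htr]
    simp only [Complex.re_sum]
    rw [Fintype.sum_prod_type, Fintype.sum_prod_type]
    refine Finset.sum_congr rfl fun b _ => Finset.sum_congr rfl fun b' _ => ?_
    rw [Fin.sum_univ_two]
    have e0 : Lmap Y (Sum.inl ((b, b'), 0)) = (ptrA Y b b').re := rfl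
    have e1 : Lmap Y (Sum.inl ((b, b'), 1)) = (ptrA Y b b').im := by
      simp only [hLmap, WithLp.equiv_symm_apply, WithLp.ofLp_toLp, Sum.elim_inl]
      norm_num
    have eN0 : y (Sum.inl ((b, b'), 0)) = (N b b').re := by rw [hN]; rfl
    have eN1 : y (Sum.inl ((b, b'), 1)) = (N b b').im := by rw [hN]; rfl
    rw [e0, e1, eN0, eN1, hsym b b']
    simp only [Complex.mul_re, Complex.conj_re, Complex.conj_im]
    ring
  -- (1): positivity on the cone
  have hG : ∀ Y : Matrix (A × B) (A × B) ℂ, Y.PosSemidef →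
      0 ≤ ((N * ptrA Y).trace).re + ((ρ * Y).trace).re * c' := by
    intro Y hY
    have hmem : Lmap Y ∈ K.closure := subset_closure ⟨Y, hY, rfl⟩
    have h := hy1 _ hmem
    rwa [hinner Y (ptrA_isHermitian hY.1)] at h
  -- (2): strict negativity at b₀
  have hb2 : dA⁻¹ * (N.trace).re + (p + ε) * c' < 0 := by
    have heval : inner ℝ y b₀ = dA⁻¹ * (N.trace).re + (p + ε) * c' := by
      rw [PiLp.inner_apply]
      simp only [RCLike.inner_apply', starRingEnd_apply, star_trivial]
      rw [Fintype.sum_sum_type]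
      have hunit : ∑ u : Unit, y (Sum.inr u) * b₀ (Sum.inr u) = (p + ε) * c' := by
        rw [Fintype.sum_unique]
        have h1 : b₀ (Sum.inr default) = p + ε := rfl
        rw [h1, mul_comm]
      rw [hunit]
      congr 1
      congr 1
      rw [Fintype.sum_prod_type]
      have hq : ∀ q : B × B, (∑ k : Fin 2, y (Sum.inl (q, k)) * b₀ (Sum.inl (q, k)))
          = (if q.1 = q.2 then (N q.1 q.2).re * dA⁻¹ else 0) := by
        rintro ⟨b, b'⟩
        rw [Fin.sum_univ_two]
        have hb0 : b₀ (Sum.inl ((b, b'), 0)) = (if b = b' then dA⁻¹ else 0) := rfl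
        have hb1 : b₀ (Sum.inl ((b, b'), 1)) = 0 := by
          simp only [hb₀def, WithLp.equiv_symm_apply, WithLp.ofLp_toLp, Sum.elim_inl]
          norm_num
        have hy0 : y (Sum.inl ((b, b'), 0)) = (N b b').re := by rw [hN]; rfl
        rw [hb0, hb1, hy0, mul_zero, add_zero, mul_ite, mul_zero]
      simp only [hq]
      rw [Fintype.sum_prod_type]
      simp only [Finset.sum_ite_eq, Finset.mem_univ, if_true]
      rw [Matrix.trace, Complex.re_sum, Finset.mul_sum]
      exact Finset.sum_congr rfl fun b _ => mul_comm _ _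
    rw [← heval]
    exact hy2
  -- quadratic form positivity
  set G : Matrix (A × B) (A × B) ℂ := liftA A N + (c' : ℂ) • ρ with hGdef
  have hGform : ∀ v : (A × B) → ℂ, 0 ≤ (star v ⬝ᵥ (G *ᵥ v)).re := by
    intro v
    have hYv := outer_posSemidef v
    have h1 := hG _ hYv
    have h2 : star v ⬝ᵥ (G *ᵥ v)
        = (N * ptrA (Matrix.of fun p q => v p * star (v q))).trace
          + (c' : ℂ) * (ρ * Matrix.of fun p q => v p * star (v q)).trace := by
      rw [← trace_mul_outer, hGdef, Matrix.add_mul, Matrix.trace_add, trace_liftA_mul,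
        Matrix.smul_mul, Matrix.trace_smul, smul_eq_mul]
    rw [h2, Complex.add_re, Complex.re_ofReal_mul]
    linarith [h1]
  -- pass to the Hermitian part
  set Nh : Matrix B B ℂ := (2:ℂ)⁻¹ • (N + Nᴴ) with hNh
  have hstar2 : star ((2:ℂ)⁻¹) = (2:ℂ)⁻¹ := by
    rw [star_inv₀]
    norm_num
  have hNhherm : Nh.IsHermitian := by
    rw [Matrix.IsHermitian, hNh, Matrix.conjTranspose_smul, Matrix.conjTranspose_add,
      Matrix.conjTranspose_conjTranspose, hstar2, add_comm]
  have hNhtr : Nh.trace = ((N.trace.re : ℝ) : ℂ) := by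
    rw [hNh, Matrix.trace_smul, Matrix.trace_add, Matrix.trace_conjTranspose, smul_eq_mul]
    rw [show star N.trace = starRingEnd ℂ N.trace from rfl, Complex.add_conj]
    push_cast
    ring
  have hGh : (liftA A Nh + (c' : ℂ) • ρ).PosSemidef := by
    have hherm : (liftA A Nh + (c' : ℂ) • ρ).IsHermitian := by
      refine Matrix.IsHermitian.add ?_ ?_
      · rw [Matrix.IsHermitian, liftA_conjTranspose, hNhherm]
      · rw [Matrix.IsHermitian, Matrix.conjTranspose_smul, hρ.1, Complex.star_def,
          Complex.conj_ofReal]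
    refine posSemidef_of_re_form_nonneg hherm fun v => ?_
    have hmat : liftA A Nh + (c' : ℂ) • ρ = (2:ℂ)⁻¹ • (G + Gᴴ) := by
      rw [hGdef, Matrix.conjTranspose_add, liftA_conjTranspose, Matrix.conjTranspose_smul,
        hρ.1, Complex.star_def, Complex.conj_ofReal, hNh, liftA_smul, liftA_add]
      module
    rw [hmat, Matrix.smul_mulVec, dotProduct_smul, smul_eq_mul,
      Matrix.add_mulVec, dotProduct_add, form_conjTranspose, Complex.add_conj]
    have hcalc : ∀ z : ℂ, ((2:ℂ)⁻¹ * ((z.re : ℝ) * 2 : ℝ)).re = z.re := by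
      intro z
      push_cast
      rw [show (2:ℂ)⁻¹ * ((z.re : ℂ) * 2) = (z.re : ℂ) by ring]
      exact Complex.ofReal_re _
    rw [show ((2:ℝ) * (star v ⬝ᵥ (G *ᵥ v)).re : ℝ) = ((star v ⬝ᵥ (G *ᵥ v)).re * 2 : ℝ) by ring]
    rw [hcalc]
    exact hGform v
  -- case analysis on the value coordinate of the functional
  rcases lt_trichotomy c' 0 with hneg | hzero | hposc
  · -- c' < 0: extract the dual witness
    have hcpos : (0:ℝ) < -c' := by linarith
    set W : Matrix B B ℂ := (((-c')⁻¹ : ℝ) : ℂ) • Nh with hW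
    have hWpsd0 := posSemidef_smul_real hGh (le_of_lt (inv_pos.mpr hcpos))
    have hkey : ((((-c')⁻¹ : ℝ) : ℂ)) • (liftA A Nh + (c' : ℂ) • ρ) = liftA A W - ρ := by
      rw [smul_add, smul_smul, hW, ← liftA_smul]
      have hne : (c' : ℂ) ≠ 0 := by exact_mod_cast (ne_of_lt hneg)
      have hsc : (((-c')⁻¹ : ℝ) : ℂ) * (c' : ℂ) = -1 := by
        push_cast
        rw [show ((-c')⁻¹ : ℂ) = -((c' : ℂ))⁻¹ by push_cast; rw [inv_neg]]
        field_simp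
      rw [hsc, neg_one_smul, sub_eq_add_neg]
    have hdual : (liftA A W - ρ).PosSemidef := by rw [← hkey]; exact hWpsd0
    have hWpsd : W.PosSemidef := by
      refine posSemidef_of_liftA (A := A) ?_
      have h := hdual.add hρ
      rwa [sub_add_cancel] at h
    refine ⟨W, hWpsd, hdual, ?_⟩
    have hWtr : W.trace.re = (-c')⁻¹ * N.trace.re := by
      rw [hW, Matrix.trace_smul, smul_eq_mul, hNhtr, ← Complex.ofReal_mul]
      exact Complex.ofReal_re _
    rw [hWtr]
    have h1 : dA⁻¹ * N.trace.re < (-c') * (p + ε) := by nlinarith [hb2]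
    have h2 : N.trace.re < dA * ((-c') * (p + ε)) := by
      have h3 := mul_lt_mul_of_pos_left h1 hA0
      have h4 : dA * (dA⁻¹ * N.trace.re) = N.trace.re := by
        field_simp
      rw [h4] at h3
      exact h3
    have h5 := mul_lt_mul_of_pos_left h2 (inv_pos.mpr hcpos)
    have h6 : (-c')⁻¹ * (dA * ((-c') * (p + ε))) = dA * (p + ε) := by
      rw [show (-c')⁻¹ * (dA * ((-c') * (p + ε))) = ((-c')⁻¹ * (-c')) * (dA * (p + ε)) by ring,
        inv_mul_cancel₀ (ne_of_gt hcpos), one_mul]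
    rw [h6] at h5
    exact le_of_lt h5
  · -- c' = 0: contradiction
    exfalso
    have hpsd : (liftA A Nh).PosSemidef := by
      have h := hGh
      rw [hzero] at h
      simpa using h
    have htr0 : 0 ≤ ((liftA A Nh).trace).re := (Complex.le_def.mp (psd_trace_nonneg hpsd)).1
    rw [trace_liftA, hNhtr] at htr0
    rw [show ((Fintype.card A : ℂ)) = ((dA : ℝ) : ℂ) by rw [hdA]; push_cast; ring] at htr0
    rw [← Complex.ofReal_mul, Complex.ofReal_re] at htr0
    rw [hzero] at hb2
    have h9 : 0 ≤ N.trace.re := by nlinarith [htr0, hA0]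
    nlinarith [hb2, inv_pos.mpr hA0, h9]
  · -- c' > 0: contradiction with the feasible point
    exfalso
    obtain ⟨Y₀, hY₀, hfeas₀, hveq⟩ := v0_mem_msfSet (B := B) (ρ := ρ) hρtr
    have hle : ((ρ * Y₀).trace).re ≤ p := le_csSup (msfSet_bddAbove ρ) ⟨Y₀, hY₀, hfeas₀, rfl⟩
    have h1 := hG Y₀ hY₀
    have h2 : (N * ptrA Y₀).trace = ((Fintype.card A : ℂ))⁻¹ * N.trace := by
      rw [hfeas₀, Matrix.mul_smul, Matrix.mul_one, Matrix.trace_smul, smul_eq_mul]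
    have h3 : ((N * ptrA Y₀).trace).re = dA⁻¹ * N.trace.re := by
      rw [h2, show ((Fintype.card A : ℂ))⁻¹ = ((dA⁻¹ : ℝ) : ℂ) by rw [hdA]; push_cast; ring,
        Complex.re_ofReal_mul]
    rw [h3] at h1
    nlinarith [mul_le_mul_of_nonneg_right hle hposc.le, mul_pos hε hposc]

end Sep


section ReKron
open Kronecker

variable {dA₁ dB₁ dA₂ dB₂ : ℕ}

/-- The reindexing equivalence underlying `reKron`. -/
def reEquiv (dA₁ dB₁ dA₂ dB₂ : ℕ) :
    ((Fin dA₁ × Fin dA₂) × (Fin dB₁ × Fin dB₂)) ≃ ((Fin dA₁ × Fin dB₁) × (Fin dA₂ × Fin dB₂)) where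
  toFun p := ((p.1.1, p.2.1), (p.1.2, p.2.2))
  invFun p := ((p.1.1, p.2.1), (p.1.2, p.2.2))
  left_inv p := rfl
  right_inv p := rfl

lemma reKron_eq (X : Matrix (Fin dA₁ × Fin dB₁) (Fin dA₁ × Fin dB₁) ℂ)
    (Y : Matrix (Fin dA₂ × Fin dB₂) (Fin dA₂ × Fin dB₂) ℂ) :
    reKron dA₁ dB₁ dA₂ dB₂ X Y
      = (X ⊗ₖ Y).submatrix (reEquiv dA₁ dB₁ dA₂ dB₂) (reEquiv dA₁ dB₁ dA₂ dB₂) := rfl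

lemma trace_submatrix_equiv {m n : Type*} [Fintype m] [Fintype n] (M : Matrix n n ℂ)
    (e : m ≃ n) : (M.submatrix e e).trace = M.trace := by
  simp only [Matrix.trace, Matrix.diag, Matrix.submatrix_apply]
  exact Fintype.sum_equiv e _ _ fun i => rfl

lemma reKron_posSemidef {X : Matrix (Fin dA₁ × Fin dB₁) (Fin dA₁ × Fin dB₁) ℂ}
    {Y : Matrix (Fin dA₂ × Fin dB₂) (Fin dA₂ × Fin dB₂) ℂ}
    (hX : X.PosSemidef) (hY : Y.PosSemidef) : (reKron dA₁ dB₁ dA₂ dB₂ X Y).PosSemidef := by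
  rw [reKron_eq]
  exact (PosSemidef.kron hX hY).submatrix _

lemma trace_reKron_mul (X X' : Matrix (Fin dA₁ × Fin dB₁) (Fin dA₁ × Fin dB₁) ℂ)
    (Y Y' : Matrix (Fin dA₂ × Fin dB₂) (Fin dA₂ × Fin dB₂) ℂ) :
    ((reKron dA₁ dB₁ dA₂ dB₂ X Y) * (reKron dA₁ dB₁ dA₂ dB₂ X' Y')).trace
      = (X * X').trace * (Y * Y').trace := by
  rw [reKron_eq, reKron_eq, Matrix.submatrix_mul_equiv, trace_submatrix_equiv,
    ← Matrix.mul_kronecker_mul, Matrix.trace_kronecker]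

lemma trace_reKron (X : Matrix (Fin dA₁ × Fin dB₁) (Fin dA₁ × Fin dB₁) ℂ)
    (Y : Matrix (Fin dA₂ × Fin dB₂) (Fin dA₂ × Fin dB₂) ℂ) :
    (reKron dA₁ dB₁ dA₂ dB₂ X Y).trace = X.trace * Y.trace := by
  rw [reKron_eq, trace_submatrix_equiv, Matrix.trace_kronecker]

lemma ptrA_reKron (Y₁ : Matrix (Fin dA₁ × Fin dB₁) (Fin dA₁ × Fin dB₁) ℂ)
    (Y₂ : Matrix (Fin dA₂ × Fin dB₂) (Fin dA₂ × Fin dB₂) ℂ) :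
    ptrA (reKron dA₁ dB₁ dA₂ dB₂ Y₁ Y₂) = (ptrA Y₁) ⊗ₖ (ptrA Y₂) := by
  ext b b'
  rcases b with ⟨b₁, b₂⟩
  rcases b' with ⟨b₁', b₂'⟩
  simp only [ptrA_apply, Matrix.kroneckerMap_apply, reKron, Matrix.of_apply,
    Fintype.sum_prod_type]
  rw [Finset.sum_mul_sum]

lemma liftA_kron (W₁ : Matrix (Fin dB₁) (Fin dB₁) ℂ) (W₂ : Matrix (Fin dB₂) (Fin dB₂) ℂ) :
    liftA (Fin dA₁ × Fin dA₂) (W₁ ⊗ₖ W₂)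
      = reKron dA₁ dB₁ dA₂ dB₂ (liftA (Fin dA₁) W₁) (liftA (Fin dA₂) W₂) := by
  ext p q
  rcases p with ⟨⟨a₁, a₂⟩, ⟨b₁, b₂⟩⟩
  rcases q with ⟨⟨a₁', a₂'⟩, ⟨b₁', b₂'⟩⟩
  simp only [liftA_apply, reKron, Matrix.of_apply, Matrix.kroneckerMap_apply, Prod.mk.injEq]
  by_cases h₁ : a₁ = a₁' <;> by_cases h₂ : a₂ = a₂' <;> simp [h₁, h₂] <;> ring

lemma sub_kron {m n : Type*} [Fintype m] [Fintype n] (X X' : Matrix m m ℂ) (Y : Matrix n n ℂ) :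
    (X - X') ⊗ₖ Y = X ⊗ₖ Y - X' ⊗ₖ Y := by
  ext p q
  simp [Matrix.kroneckerMap_apply]
  ring

lemma kron_sub {m n : Type*} [Fintype m] [Fintype n] (X : Matrix m m ℂ) (Y Y' : Matrix n n ℂ) :
    X ⊗ₖ (Y - Y') = X ⊗ₖ Y - X ⊗ₖ Y' := by
  ext p q
  simp [Matrix.kroneckerMap_apply]
  ring

lemma submatrix_sub_equiv {m n : Type*} (X Y : Matrix n n ℂ) (e : m → n) :
    (X - Y).submatrix e e = X.submatrix e e - Y.submatrix e e := rfl

lemma helper_le_of_forall_pos {a b : ℝ} (h : ∀ ε : ℝ, 0 < ε → a ≤ b + ε) : a ≤ b := by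
  by_contra hc
  push_neg at hc
  have := h ((a - b) / 2) (by linarith)
  linarith

end ReKron

/-- The maximal singlet fraction is multiplicative under tensor products:
`F(ρ₁ ⊠ ρ₂) = F(ρ₁) · F(ρ₂)`. -/
theorem msf_multiplicative (dA₁ dB₁ dA₂ dB₂ : ℕ)
    (hdA₁ : 1 ≤ dA₁) (hdB₁ : 1 ≤ dB₁) (hdA₂ : 1 ≤ dA₂) (hdB₂ : 1 ≤ dB₂)
    (ρ₁ : Matrix (Fin dA₁ × Fin dB₁) (Fin dA₁ × Fin dB₁) ℂ)
    (hρ₁ : ρ₁.PosSemidef) (hρ₁tr : ρ₁.trace = 1)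
    (ρ₂ : Matrix (Fin dA₂ × Fin dB₂) (Fin dA₂ × Fin dB₂) ℂ)
    (hρ₂ : ρ₂.PosSemidef) (hρ₂tr : ρ₂.trace = 1) :
    msf (reKron dA₁ dB₁ dA₂ dB₂ ρ₁ ρ₂) = msf ρ₁ * msf ρ₂ := by
  classical
  haveI : Nonempty (Fin dA₁) := Fin.pos_iff_nonempty.mp (by omega)
  haveI : Nonempty (Fin dB₁) := Fin.pos_iff_nonempty.mp (by omega)
  haveI : Nonempty (Fin dA₂) := Fin.pos_iff_nonempty.mp (by omega)
  haveI : Nonempty (Fin dB₂) := Fin.pos_iff_nonempty.mp (by omega)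
  set ρb := reKron dA₁ dB₁ dA₂ dB₂ ρ₁ ρ₂ with hρb
  have hρbpsd : ρb.PosSemidef := reKron_posSemidef hρ₁ hρ₂
  have hρbtr : ρb.trace = 1 := by rw [hρb, trace_reKron, hρ₁tr, hρ₂tr, mul_one]
  set p₁ : ℝ := msf ρ₁ with hp₁
  set p₂ : ℝ := msf ρ₂ with hp₂
  have hp₁0 : 0 ≤ p₁ := le_trans (by positivity) (msf_nonneg hρ₁tr)
  have hp₂0 : 0 ≤ p₂ := le_trans (by positivity) (msf_nonneg hρ₂tr)
  have hdA₁0 : (0:ℝ) < (dA₁ : ℝ) := by exact_mod_cast Nat.lt_of_lt_of_le Nat.zero_lt_one hdA₁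
  have hdA₂0 : (0:ℝ) < (dA₂ : ℝ) := by exact_mod_cast Nat.lt_of_lt_of_le Nat.zero_lt_one hdA₂
  -- Lower bound
  have hlower : ∀ ε : ℝ, 0 < ε → p₁ * p₂ ≤ msf ρb + ε := by
    intro ε hε
    set ε₀ : ℝ := min 1 (ε / (p₁ + p₂ + 1)) with hε₀
    have hd : (0:ℝ) < p₁ + p₂ + 1 := by linarith
    have hε₀pos : 0 < ε₀ := lt_min one_pos (by positivity)
    have hε₀1 : ε₀ ≤ 1 := min_le_left _ _
    have hε₀le : ε₀ * (p₁ + p₂ + 1) ≤ ε := by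
      have h := min_le_right 1 (ε / (p₁ + p₂ + 1))
      have h2 : (ε / (p₁ + p₂ + 1)) * (p₁ + p₂ + 1) = ε := by field_simp
      nlinarith
    obtain ⟨x₁, hx₁mem, hx₁⟩ := exists_lt_of_lt_csSup (⟨_, v0_mem_msfSet hρ₁tr⟩ :
      (msfSet ρ₁).Nonempty) (show p₁ - ε₀ < sSup (msfSet ρ₁) by
        rw [← msf_eq_sSup]; rw [← hp₁]; linarith)
    obtain ⟨x₂, hx₂mem, hx₂⟩ := exists_lt_of_lt_csSup (⟨_, v0_mem_msfSet hρ₂tr⟩ :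
      (msfSet ρ₂).Nonempty) (show p₂ - ε₀ < sSup (msfSet ρ₂) by
        rw [← msf_eq_sSup]; rw [← hp₂]; linarith)
    have hx₁le : x₁ ≤ p₁ := le_csSup (msfSet_bddAbove ρ₁) hx₁mem
    have hx₂le : x₂ ≤ p₂ := le_csSup (msfSet_bddAbove ρ₂) hx₂mem
    obtain ⟨Y₁, hY₁, hf₁, hv₁⟩ := hx₁mem
    obtain ⟨Y₂, hY₂, hf₂, hv₂⟩ := hx₂mem
    have hz₁ := trace_mul_nonneg hρ₁ hY₁
    have hz₂ := trace_mul_nonneg hρ₂ hY₂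
    have hx₁0 : 0 ≤ x₁ := by rw [hv₁]; exact (Complex.le_def.mp hz₁).1
    have hx₂0 : 0 ≤ x₂ := by rw [hv₂]; exact (Complex.le_def.mp hz₂).1
    have him₁ : ((ρ₁ * Y₁).trace).im = 0 := by
      have := (Complex.le_def.mp hz₁).2
      simpa using this.symm
    have him₂ : ((ρ₂ * Y₂).trace).im = 0 := by
      have := (Complex.le_def.mp hz₂).2
      simpa using this.symm
    have hmemb : x₁ * x₂ ∈ msfSet ρb := by
      refine ⟨reKron dA₁ dB₁ dA₂ dB₂ Y₁ Y₂, reKron_posSemidef hY₁ hY₂, ?_, ?_⟩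
      · rw [ptrA_reKron, hf₁, hf₂, Matrix.smul_kronecker, Matrix.kronecker_smul,
          Matrix.one_kronecker_one, smul_smul]
        congr 1
        rw [Fintype.card_prod]
        push_cast
        rw [mul_inv]
      · rw [hρb, trace_reKron_mul, Complex.mul_re, him₁, him₂, hv₁, hv₂]
        ring
    have hle : x₁ * x₂ ≤ msf ρb := le_csSup (msfSet_bddAbove ρb) hmemb
    have hm : p₁ * p₂ ≤ (x₁ + ε₀) * (x₂ + ε₀) :=
      mul_le_mul (by linarith) (by linarith) hp₂0 (by linarith)
    nlinarith [hm, hε₀le, hle, hx₁le, hx₂le, hε₀pos, hε₀1, hx₁0, hx₂0]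
  -- Upper bound
  have hupper : ∀ ε : ℝ, 0 < ε → msf ρb ≤ p₁ * p₂ + ε := by
    intro ε hε
    set ε₀ : ℝ := min 1 (ε / (p₁ + p₂ + 1)) with hε₀
    have hd : (0:ℝ) < p₁ + p₂ + 1 := by linarith
    have hε₀pos : 0 < ε₀ := lt_min one_pos (by positivity)
    have hε₀1 : ε₀ ≤ 1 := min_le_left _ _
    have hε₀le : ε₀ * (p₁ + p₂ + 1) ≤ ε := by
      have h := min_le_right 1 (ε / (p₁ + p₂ + 1))
      have h2 : (ε / (p₁ + p₂ + 1)) * (p₁ + p₂ + 1) = ε := by field_simp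
      nlinarith
    obtain ⟨W₁, hW₁psd, hW₁dual, hW₁tr⟩ := dual_exists hρ₁ hρ₁tr hε₀pos
    obtain ⟨W₂, hW₂psd, hW₂dual, hW₂tr⟩ := dual_exists hρ₂ hρ₂tr hε₀pos
    rw [Fintype.card_fin] at hW₁tr hW₂tr
    have hdualb : (liftA (Fin dA₁ × Fin dA₂) (Matrix.kroneckerMap (· * ·) W₁ W₂) - ρb).PosSemidef := by
      rw [liftA_kron, hρb, reKron_eq, reKron_eq, ← submatrix_sub_equiv]
      have hsplit : Matrix.kroneckerMap (· * ·) (liftA (Fin dA₁) W₁) (liftA (Fin dA₂) W₂)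
            - Matrix.kroneckerMap (· * ·) ρ₁ ρ₂
          = Matrix.kroneckerMap (· * ·) (liftA (Fin dA₁) W₁ - ρ₁) (liftA (Fin dA₂) W₂)
            + Matrix.kroneckerMap (· * ·) ρ₁ (liftA (Fin dA₂) W₂ - ρ₂) := by
        rw [sub_kron, kron_sub]
        abel
      rw [hsplit]
      exact ((PosSemidef.kron hW₁dual (liftA_posSemidef hW₂psd)).add
        (PosSemidef.kron hρ₁ hW₂dual)).submatrix _
    have ht₁ := psd_trace_nonneg hW₁psd
    have ht₂ := psd_trace_nonneg hW₂psd
    have ht₁0 : 0 ≤ W₁.trace.re := (Complex.le_def.mp ht₁).1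
    have ht₂0 : 0 ≤ W₂.trace.re := (Complex.le_def.mp ht₂).1
    have htim₁ : W₁.trace.im = 0 := by
      have := (Complex.le_def.mp ht₁).2
      simpa using this.symm
    have hboundall : ∀ x ∈ msfSet ρb, x ≤ (p₁ + ε₀) * (p₂ + ε₀) := by
      rintro x ⟨Y, hY, hfeas, rfl⟩
      have h := value_le_of_dual hdualb hY hfeas
      have htr : ((Matrix.kroneckerMap (· * ·) W₁ W₂).trace).re
          = W₁.trace.re * W₂.trace.re := by
        rw [Matrix.trace_kronecker, Complex.mul_re, htim₁]
        ring
      rw [htr] at h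
      have hcard : (Fintype.card (Fin dA₁ × Fin dA₂) : ℝ) = (dA₁ : ℝ) * (dA₂ : ℝ) := by
        rw [Fintype.card_prod]
        push_cast
        simp
      rw [hcard] at h
      have hp₁ε : (0:ℝ) ≤ p₁ + ε₀ := by linarith
      have hp₂ε : (0:ℝ) ≤ p₂ + ε₀ := by linarith
      have hmul : W₁.trace.re * W₂.trace.re
          ≤ ((dA₁ : ℝ) * (p₁ + ε₀)) * ((dA₂ : ℝ) * (p₂ + ε₀)) :=
        mul_le_mul hW₁tr hW₂tr ht₂0 (by positivity)
      have hinv : (0:ℝ) ≤ ((dA₁ : ℝ) * (dA₂ : ℝ))⁻¹ := by positivity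
      have h2 := mul_le_mul_of_nonneg_left hmul hinv
      have h3 : ((dA₁ : ℝ) * (dA₂ : ℝ))⁻¹ * (((dA₁ : ℝ) * (p₁ + ε₀)) * ((dA₂ : ℝ) * (p₂ + ε₀)))
          = (p₁ + ε₀) * (p₂ + ε₀) := by
        field_simp
      rw [h3] at h2
      linarith
    have hub : msf ρb ≤ (p₁ + ε₀) * (p₂ + ε₀) :=
      csSup_le (⟨_, v0_mem_msfSet hρbtr⟩ : (msfSet ρb).Nonempty) hboundall
    nlinarith [hub, hε₀le, hε₀1, hp₁0, hp₂0, hε₀pos]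
  have h1 : msf ρb ≤ p₁ * p₂ := helper_le_of_forall_pos hupper
  have h2 : p₁ * p₂ ≤ msf ρb := by
    refine helper_le_of_forall_pos fun ε hε => ?_
    linarith [hlower ε hε]
  linarith
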